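/- arXiv:0903.5496 — 2 statements merged into one kernel-verified Lean document; each statement's English description precedes it below -/
import Mathlib

section
/- Let (L, β, γ) be an SL(2,ℝ)-Higgs bundle on a compact Riemann surface X of genus g ≥ 2, i.e. L a holomorphic line bundle, β ∈ H⁰(L²K), γ ∈ H⁰(L⁻²K), where K is the canonical bundle. If deg(L) > 0 and γ ≠ 0, then deg(L) ≤ g − 1; if deg(L) < 0 and β ≠ 0, then deg(L) ≥ 1 − g. In particular, any line bundle L carrying a polystable SL(2,ℝ)-Higgs bundle structure satisfies |deg(L)| ≤ g − 1 (the Milnor–Wood inequality). -/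
/-- The Milnor–Wood inequality for `SL(2,ℝ)`-Higgs bundles `(L, β, γ)` on a compact
Riemann surface of genus `g ≥ 2`.  Holomorphic line bundles are modelled abstractly as a
commutative group `B` (tensor product and duals) equipped with a degree homomorphism
`deg : B → ℤ` and a predicate `hasNonzeroSection` recording that `H⁰` is nonzero, subject
to the axiom that a line bundle with a nonzero holomorphic section has nonnegative degree.
`K` is the canonical bundle, of degree `2g − 2`; `β ∈ H⁰(L²K)`, `γ ∈ H⁰(L⁻²K)`.

If `deg L > 0` and `γ ≠ 0` then `deg L ≤ g − 1`; if `deg L < 0` and `β ≠ 0` then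
`deg L ≥ 1 − g`; in particular any `L` carrying a polystable `SL(2,ℝ)`-Higgs bundle
structure (polystability requires `γ ≠ 0` when `deg L > 0` and `β ≠ 0` when `deg L < 0`)
satisfies `|deg L| ≤ g − 1`. -/
theorem milnor_wood_sl2
    (B : Type) [CommGroup B]
    (deg : B → ℤ)
    (hdeg_mul : ∀ x y : B, deg (x * y) = deg x + deg y)
    (hdeg_inv : ∀ x : B, deg x⁻¹ = - deg x)
    (hasNonzeroSection : B → Prop)
    (hsec : ∀ x : B, hasNonzeroSection x → 0 ≤ deg x)
    (g : ℤ) (hg : 2 ≤ g)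
    (K L : B) (hK : deg K = 2 * g - 2) :
    (0 < deg L → hasNonzeroSection (L⁻¹ * L⁻¹ * K) → deg L ≤ g - 1) ∧
    (deg L < 0 → hasNonzeroSection (L * L * K) → 1 - g ≤ deg L) ∧
    ((0 < deg L → hasNonzeroSection (L⁻¹ * L⁻¹ * K)) →
      (deg L < 0 → hasNonzeroSection (L * L * K)) → |deg L| ≤ g - 1) := by
  have h1 : 0 < deg L → hasNonzeroSection (L⁻¹ * L⁻¹ * K) → deg L ≤ g - 1 := by
    intro _ hs
    have := hsec _ hs
    rw [hdeg_mul, hdeg_mul, hdeg_inv, hK] at this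
    omega
  have h2 : deg L < 0 → hasNonzeroSection (L * L * K) → 1 - g ≤ deg L := by
    intro _ hs
    have := hsec _ hs
    rw [hdeg_mul, hdeg_mul, hK] at this
    omega
  refine ⟨h1, h2, fun hγ hβ => ?_⟩
  rcases lt_trichotomy (deg L) 0 with h | h | h
  · have := h2 h (hβ h); rw [abs_of_neg h]; omega
  · rw [h]; simp; omega
  · have := h1 h (hγ h); rw [abs_of_pos h]; omega
end

section
/- Let V be a rank 2 holomorphic vector bundle on a compact Riemann surface that decomposes as V = N ⊕ N⁻¹K with deg(N) > g − 1 (so deg(N) ≠ deg(N⁻¹K)), and let γ = ((0,1),(1,0)) : V → V* ⊗ K be the standard pairing. If an automorphism g of V satisfies g* ∘ γ' ∘ g = γ with γ' also the standard pairing on N ⊕ N⁻¹K, then g is diagonal of the form diag(t, t⁻¹) for some t ∈ ℂ*. In particular, two Higgs fields β = ((β₁,β₃),(β₃,β₂)) and β' = ((β'₁,β'₃),(β'₃,β'₂)) in H⁰(S²V ⊗ K) give isomorphic triples (V,β,γ) ≅ (V,β',γ) if and only if (β'₁, β'₂, β'₃) = (t²β₁, t⁻²β₂, β₃) for some t ∈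 ℂ*. -/
/-- Isomorphism classes in the components `M⁰_c`, `c > 0` (Proposition on equivalence of
tuples).  Line bundles on the compact Riemann surface are modelled as a commutative group
`B` with a degree homomorphism, and holomorphic sections are modelled inside an integral
domain `A` which is a `ℂ`-algebra (the ring of rational sections): `Sec x ⊆ A` is the
space `H⁰(x)`, products of sections are sections of the tensor product, bundles of
negative degree have no nonzero sections, and `H⁰(𝒪) = ℂ·1` (the surface is compact and
connected).

Let `V = N ⊕ N⁻¹K` with `deg N > g − 1` and let `γ = ((0,1),(1,0))` be the standard
pairing.  An endomorphism `g` of `V` has components `g₁ ∈ Hom(N,N) = H⁰(𝒪)`,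
`g₂ ∈ Hom(N⁻¹K, N) = H⁰(N²K⁻¹)`, `g₃ ∈ Hom(N, N⁻¹K) = H⁰(N⁻²K)`,
`g₄ ∈ Hom(N⁻¹K, N⁻¹K) = H⁰(𝒪)`; it is an automorphism when `g₁g₄ − g₂g₃ ≠ 0`.  The
compatibility `g* ∘ γ' ∘ g = γ` reads, in components,
`g₁g₃ + g₃g₁ = 0`, `g₁g₄ + g₃g₂ = 1`, `g₂g₄ + g₄g₂ = 0`.

(1) Any such automorphism is diagonal of the form `diag(t, t⁻¹)` with `t ∈ ℂ*`.
(2) Two Higgs fields `β = ((β₁,β₃),(β₃,β₂))`, `β' = ((β'₁,β'₃),(β'₃,β'₂))` in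
`H⁰(S²V ⊗ K)` give isomorphic triples `(V,β,γ) ≅ (V,β',γ)` (i.e. `β' = g β gᵀ` for some
such automorphism `g`) iff `(β'₁, β'₂, β'₃) = (t²β₁, t⁻²β₂, β₃)` for some `t ∈ ℂ*`. -/
theorem higgs_field_equivalence
    (A : Type) [CommRing A] [IsDomain A] [Algebra ℂ A]
    (B : Type) [CommGroup B]
    (deg : B → ℤ)
    (hdeg_mul : ∀ x y : B, deg (x * y) = deg x + deg y)
    (hdeg_inv : ∀ x : B, deg x⁻¹ = - deg x)
    (Sec : B → Submodule ℂ A)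
    (hSec_mul : ∀ (x y : B) (s t : A), s ∈ Sec x → t ∈ Sec y → s * t ∈ Sec (x * y))
    (hSec_neg : ∀ x : B, deg x < 0 → Sec x = ⊥)
    (hSec_one : Sec 1 = Submodule.span ℂ {(1 : A)})
    (g : ℤ) (hg : 2 ≤ g)
    (N K : B) (hK : deg K = 2 * g - 2) (hN : g - 1 < deg N) :
    (∀ g₁ g₂ g₃ g₄ : A,
      g₁ ∈ Sec 1 → g₂ ∈ Sec (N * N * K⁻¹) → g₃ ∈ Sec (N⁻¹ * N⁻¹ * K) → g₄ ∈ Sec 1 →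
      g₁ * g₄ - g₂ * g₃ ≠ 0 →
      g₁ * g₃ + g₃ * g₁ = 0 → g₁ * g₄ + g₃ * g₂ = 1 → g₂ * g₄ + g₄ * g₂ = 0 →
      ∃ t : ℂ, t ≠ 0 ∧ g₁ = algebraMap ℂ A t ∧ g₄ = algebraMap ℂ A t⁻¹ ∧
        g₂ = 0 ∧ g₃ = 0) ∧
    (∀ β₁ β₂ β₃ β₁' β₂' β₃' : A,
      β₁ ∈ Sec (N * N * K) → β₂ ∈ Sec (N⁻¹ * N⁻¹ * (K * K * K)) → β₃ ∈ Sec (K * K) →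
      β₁' ∈ Sec (N * N * K) → β₂' ∈ Sec (N⁻¹ * N⁻¹ * (K * K * K)) → β₃' ∈ Sec (K * K) →
      ((∃ g₁ g₂ g₃ g₄ : A,
          g₁ ∈ Sec 1 ∧ g₂ ∈ Sec (N * N * K⁻¹) ∧ g₃ ∈ Sec (N⁻¹ * N⁻¹ * K) ∧ g₄ ∈ Sec 1 ∧
          g₁ * g₄ - g₂ * g₃ ≠ 0 ∧
          g₁ * g₃ + g₃ * g₁ = 0 ∧ g₁ * g₄ + g₃ * g₂ = 1 ∧ g₂ * g₄ + g₄ * g₂ = 0 ∧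
          β₁' = g₁ * g₁ * β₁ + 2 * (g₁ * g₂) * β₃ + g₂ * g₂ * β₂ ∧
          β₃' = g₁ * g₃ * β₁ + (g₁ * g₄ + g₂ * g₃) * β₃ + g₂ * g₄ * β₂ ∧
          β₂' = g₃ * g₃ * β₁ + 2 * (g₃ * g₄) * β₃ + g₄ * g₄ * β₂) ↔
        ∃ t : ℂ, t ≠ 0 ∧ β₁' = (t ^ 2) • β₁ ∧ β₂' = (t ^ 2)⁻¹ • β₂ ∧ β₃' = β₃)) := by
  have hinj : Function.Injective (algebraMap ℂ A) := RingHom.injective _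
  have hSecNK : Sec (N⁻¹ * N⁻¹ * K) = ⊥ := by
    apply hSec_neg
    rw [hdeg_mul, hdeg_mul, hdeg_inv, hK]
    omega
  have hone : ∀ x : A, x ∈ Sec 1 → ∃ c : ℂ, x = algebraMap ℂ A c := by
    intro x hx
    rw [hSec_one, Submodule.mem_span_singleton] at hx
    obtain ⟨c, hc⟩ := hx
    exact ⟨c, by rw [← hc, Algebra.smul_def, mul_one]⟩
  have key : ∀ g₁ g₂ g₃ g₄ : A,
      g₁ ∈ Sec 1 → g₂ ∈ Sec (N * N * K⁻¹) → g₃ ∈ Sec (N⁻¹ * N⁻¹ * K) → g₄ ∈ Sec 1 →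
      g₁ * g₄ - g₂ * g₃ ≠ 0 →
      g₁ * g₃ + g₃ * g₁ = 0 → g₁ * g₄ + g₃ * g₂ = 1 → g₂ * g₄ + g₄ * g₂ = 0 →
      ∃ t : ℂ, t ≠ 0 ∧ g₁ = algebraMap ℂ A t ∧ g₄ = algebraMap ℂ A t⁻¹ ∧
        g₂ = 0 ∧ g₃ = 0 := by
    intro g₁ g₂ g₃ g₄ h₁ h₂ h₃ h₄ hdet e₁ e₂ e₃
    have hg3 : g₃ = 0 := by
      rw [hSecNK] at h₃; simpa using h₃
    have hprod : g₁ * g₄ = 1 := by rw [hg3] at e₂; simpa using e₂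
    have hg4ne : g₄ ≠ 0 := by
      intro h; rw [h, mul_zero] at hprod; exact one_ne_zero hprod.symm
    have hg2 : g₂ = 0 := by
      have h2 : (2 : A) * (g₂ * g₄) = 0 := by linear_combination e₃
      rcases mul_eq_zero.mp h2 with h | h
      · exfalso
        have h2' : algebraMap ℂ A (2 : ℂ) = (2 : A) := map_ofNat _ 2
        rw [← h2', ← map_zero (algebraMap ℂ A)] at h
        exact two_ne_zero (hinj h)
      · rcases mul_eq_zero.mp h with h' | h'
        · exact h'
        · exact absurd h' hg4ne
    obtain ⟨t, ht⟩ := hone g₁ h₁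
    obtain ⟨s, hs⟩ := hone g₄ h₄
    have htne : t ≠ 0 := by
      intro h0
      rw [ht, h0, map_zero, zero_mul] at hprod
      exact one_ne_zero hprod.symm
    have hst : t * s = 1 := by
      apply hinj
      rw [map_mul, map_one, ← ht, ← hs, hprod]
    have hsval : s = t⁻¹ := eq_inv_of_mul_eq_one_right hst
    exact ⟨t, htne, ht, by rw [hs, hsval], hg2, hg3⟩
  constructor
  · exact key
  · intro β₁ β₂ β₃ β₁' β₂' β₃' hb₁ hb₂ hb₃ hb₁' hb₂' hb₃'
    constructor
    · rintro ⟨g₁, g₂, g₃, g₄, h₁, h₂, h₃, h₄, hdet, e₁, e₂, e₃, f₁, f₃, f₂⟩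
      obtain ⟨t, htne, hg1, hg4, hg2, hg3⟩ := key g₁ g₂ g₃ g₄ h₁ h₂ h₃ h₄ hdet e₁ e₂ e₃
      have h1 : algebraMap ℂ A t * algebraMap ℂ A t⁻¹ = 1 := by
        rw [← map_mul, mul_inv_cancel₀ htne, map_one]
      have hm : algebraMap ℂ A ((t ^ 2)⁻¹) = algebraMap ℂ A t⁻¹ * algebraMap ℂ A t⁻¹ := by
        rw [← map_mul]; congr 1; rw [sq, mul_inv]
      refine ⟨t, htne, ?_, ?_, ?_⟩
      · rw [f₁, hg1, hg2, Algebra.smul_def, map_pow]; ring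
      · rw [f₂, hg3, hg4, Algebra.smul_def, hm]; ring
      · rw [f₃, hg2, hg3, hg1, hg4]
        linear_combination β₃ * h1
    · rintro ⟨t, htne, f₁, f₂, f₃⟩
      have h1 : algebraMap ℂ A t * algebraMap ℂ A t⁻¹ = 1 := by
        rw [← map_mul, mul_inv_cancel₀ htne, map_one]
      have hm : algebraMap ℂ A ((t ^ 2)⁻¹) = algebraMap ℂ A t⁻¹ * algebraMap ℂ A t⁻¹ := by
        rw [← map_mul]; congr 1; rw [sq, mul_inv]
      refine ⟨algebraMap ℂ A t, 0, 0, algebraMap ℂ A t⁻¹, ?_, ?_, ?_, ?_, ?_, ?_, ?_, ?_, ?_, ?_, ?_⟩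
      · rw [hSec_one, Submodule.mem_span_singleton]
        exact ⟨t, by rw [Algebra.smul_def, mul_one]⟩
      · exact Submodule.zero_mem _
      · exact Submodule.zero_mem _
      · rw [hSec_one, Submodule.mem_span_singleton]
        exact ⟨t⁻¹, by rw [Algebra.smul_def, mul_one]⟩
      · simp [h1]
      · ring
      · simp [h1]
      · ring
      · rw [f₁, Algebra.smul_def, map_pow]; ring
      · rw [f₃]; linear_combination -β₃ * h1
      · rw [f₂, Algebra.smul_def, hm]; ring
end
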